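/- Let φ be a Bernstein function such that there exists a nonzero z₀ with Re(z₀) ≥ 0 and φ(z₀) = 0. Then φ(0) = 0, the drift δ = 0, z₀ is purely imaginary, and the Lévy measure μ is a discrete measure of the form μ = Σ_n c_n δ_{h k_n} with Σ_n c_n < ∞, for some h > 0 and positive integers k_n and c_n ≥ 0; moreover φ is periodic on the right half-plane with period 2πi/h. -/

import Mathlib

/-!
Taking real parts in `φ(z₀) = 0` gives `κ + δ Re z₀ + ∫ Re (1 - e^{-z₀ y}) μ(dy) = 0`, a sum of
nonnegative terms because `|e^{-z₀ y}| ≤ 1`. Hence `κ = 0` and `e^{-z₀ y} = 1` for `μ`-a.e. `y`,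
so the integral vanishes, `δ z₀ = φ(z₀) = 0` and `δ = 0`. By nontriviality `μ ≠ 0`, and
`e^{-z₀ y} = 1` for some `y > 0` forces `Re z₀ = 0`; more precisely `μ` is carried by the lattice
`h ℕ₊` with `h = 2π / |z₀|`. Being bounded away from `0`, that lattice makes `μ` finite by
`∫ min(1, y) dμ < ∞`, and the integrand of `φ` is `2πi/h`-periodic on it.
-/

open MeasureTheory Filter Set

/-- A Bernstein function, given by its representing triplet `(κ, δ, μ)`:
`φ(u) = κ + δ·u + ∫₀^∞ (1 - e^{-u y}) μ(dy)`, with `κ, δ ≥ 0`,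
`μ` a nonnegative measure on `(0,∞)` with `∫ min(1,y) μ(dy) < ∞`, and `φ ≢ 0`. -/
structure BernsteinFn where
  κ : ℝ
  δ : ℝ
  μ : Measure ℝ
  hκ : 0 ≤ κ
  hδ : 0 ≤ δ
  hsupp : μ (Set.Iic 0) = 0
  hint : Integrable (fun y : ℝ => min 1 y) μ
  nontriv : ¬ (κ = 0 ∧ δ = 0 ∧ μ = 0)

/-- The Bernstein function as a real function on `(0,∞)`. -/
noncomputable def BernsteinFn.toFun (φ : BernsteinFn) (u : ℝ) : ℝ :=
  φ.κ + φ.δ * u + ∫ y, (1 - Real.exp (-(u * y))) ∂φ.μ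

/-- The holomorphic extension of the Bernstein function to the right half-plane. -/
noncomputable def BernsteinFn.toFunC (φ : BernsteinFn) (z : ℂ) : ℂ :=
  (φ.κ : ℂ) + (φ.δ : ℂ) * z + ∫ y, (1 - Complex.exp (-(z * (y : ℂ)))) ∂φ.μ

/-- The derivative of the Bernstein function: `φ'(u) = δ + ∫₀^∞ y e^{-u y} μ(dy)`. -/
noncomputable def BernsteinFn.deriv1 (φ : BernsteinFn) (u : ℝ) : ℝ :=
  φ.δ + ∫ y, y * Real.exp (-(u * y)) ∂φ.μ

namespace Complex

lemma norm_exp_neg_le_one {w : ℂ} (hw : 0 ≤ w.re) : ‖exp (-w)‖ ≤ 1 := by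
  rw [norm_exp, neg_re, Real.exp_le_one_iff, neg_nonpos]
  exact hw

lemma norm_one_sub_exp_neg_le {w : ℂ} (hw : 0 ≤ w.re) : ‖1 - exp (-w)‖ ≤ 2 * min 1 ‖w‖ := by
  have hle_two : ‖1 - exp (-w)‖ ≤ 2 := by
    calc ‖1 - exp (-w)‖ ≤ ‖(1 : ℂ)‖ + ‖exp (-w)‖ := norm_sub_le _ _
      _ ≤ 2 := by rw [norm_one]; linarith [norm_exp_neg_le_one hw]
  rcases le_total ‖w‖ 1 with hsmall | hlarge
  · rw [min_eq_right hsmall, ← norm_neg, neg_sub, ← norm_neg w]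
    exact norm_exp_sub_one_le (by rwa [norm_neg])
  · rwa [min_eq_left hlarge, mul_one]

lemma re_one_sub_nonneg {w : ℂ} (hw : ‖w‖ ≤ 1) : 0 ≤ (1 - w).re := by
  rw [sub_re, one_re, sub_nonneg]
  exact (re_le_norm w).trans hw

lemma eq_one_of_norm_le_one_of_re_one_sub_eq_zero {w : ℂ} (hw : ‖w‖ ≤ 1) (hre : (1 - w).re = 0) :
    w = 1 := by
  have hre1 : w.re = 1 := by simp only [sub_re, one_re] at hre; linarith
  have him : w.im ^ 2 = 0 := by
    nlinarith [sq_norm_sub_sq_re w, sq_nonneg w.im, norm_nonneg w]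
  exact ext hre1 (pow_eq_zero_iff two_ne_zero |>.mp him)

lemma re_eq_zero_of_exp_neg_mul_eq_one {z : ℂ} {y : ℝ} (hy : y ≠ 0) (h : exp (-(z * y)) = 1) :
    z.re = 0 := by
  have hnorm := congrArg norm h
  rw [norm_exp, norm_one, Real.exp_eq_one_iff, neg_re, re_mul_ofReal, neg_eq_zero] at hnorm
  exact (mul_eq_zero.mp hnorm).resolve_right hy

lemma exists_nat_eq_of_exp_neg_mul_eq_one {z : ℂ} (hz : z ≠ 0) {y : ℝ} (hy : 0 < y)
    (h : exp (-(z * y)) = 1) : ∃ n : ℕ, 2 * Real.pi / ‖z‖ * ((n + 1 : ℕ) : ℝ) = y := by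
  obtain ⟨n, hn⟩ := exp_eq_one_iff.mp h
  have hnorm : ‖z‖ * y = 2 * Real.pi * |(n : ℝ)| := by
    have := congrArg norm hn
    simpa [norm_mul, abs_of_pos hy, abs_of_pos Real.pi_pos, mul_comm, mul_left_comm] using this
  have hn0 : n ≠ 0 := by
    rintro rfl
    simp only [Int.cast_zero, abs_zero, mul_zero] at hnorm
    exact (mul_pos (norm_pos_iff.mpr hz) hy).ne' hnorm
  refine ⟨n.natAbs - 1, ?_⟩
  rw [Nat.sub_add_cancel (Int.natAbs_pos.mpr hn0), Nat.cast_natAbs, Int.cast_abs]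
  field_simp
  linarith

end Complex

lemma min_one_mul_le_max_mul_min_one {a y : ℝ} (hy : 0 ≤ y) :
    min 1 (a * y) ≤ max 1 a * min 1 y := by
  rcases le_total y 1 with hy1 | hy1
  · rw [min_eq_right hy1]
    exact (min_le_right _ _).trans (mul_le_mul_of_nonneg_right (le_max_right _ _) hy)
  · rw [min_eq_left hy1, mul_one]
    exact (min_le_left _ _).trans (le_max_left _ _)

lemma MeasureTheory.Measure.eq_sum_smul_dirac_of_ae_mem_range {α ι : Type*} [MeasurableSpace α]
    [MeasurableSingletonClass α] [Countable ι] {μ : Measure α} {g : ι → α}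
    (hg : Function.Injective g) (h : ∀ᵐ x ∂μ, x ∈ range g) :
    μ = Measure.sum fun i => μ {g i} • Measure.dirac (g i) := by
  calc μ = μ.restrict (⋃ i, {g i}) := by
        rw [iUnion_singleton_eq_range]; exact (Measure.restrict_eq_self_of_ae_mem h).symm
    _ = Measure.sum fun i => μ.restrict {g i} :=
        Measure.restrict_iUnion (fun i j hij => disjoint_singleton.mpr (hg.ne hij))
          fun _ => measurableSet_singleton _
    _ = Measure.sum fun i => μ {g i} • Measure.dirac (g i) := by
        simp_rw [Measure.restrict_singleton]

lemma MeasureTheory.isFiniteMeasure_of_integrable_min_one {μ : Measure ℝ}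
    (hint : Integrable (fun y => min 1 y) μ) {ε : ℝ} (hε : 0 < ε) (h : ∀ᵐ y ∂μ, ε ≤ y) :
    IsFiniteMeasure μ where
  measure_univ_lt_top :=
    (measure_mono_ae (h.mono fun _ hy _ => min_le_min le_rfl hy)).trans_lt
      (hint.measure_ge_lt_top (lt_min one_pos hε))

namespace BernsteinFn

variable (φ : BernsteinFn)

lemma ae_pos : ∀ᵐ y ∂φ.μ, 0 < y := by
  rw [ae_iff]
  simp only [not_lt]
  exact φ.hsupp

lemma integrable_one_sub_exp {z : ℂ} (hz : 0 ≤ z.re) :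
    Integrable (fun y : ℝ => 1 - Complex.exp (-(z * y))) φ.μ := by
  refine (φ.hint.const_mul (2 * max 1 ‖z‖)).mono' (by fun_prop) ?_
  filter_upwards [φ.ae_pos] with y hy
  have hw : 0 ≤ (z * y).re := by rw [Complex.re_mul_ofReal]; exact mul_nonneg hz hy.le
  calc ‖1 - Complex.exp (-(z * y))‖ ≤ 2 * min 1 ‖z * y‖ := Complex.norm_one_sub_exp_neg_le hw
    _ = 2 * min 1 (‖z‖ * y) := by rw [norm_mul, Complex.norm_real, Real.norm_of_nonneg hy.le]
    _ ≤ 2 * max 1 ‖z‖ * min 1 y := by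
        rw [mul_assoc]
        exact mul_le_mul_of_nonneg_left
          (min_one_mul_le_max_mul_min_one hy.le) zero_le_two

lemma κ_eq_zero_and_ae_exp_eq_one {z : ℂ} (hz : 0 ≤ z.re) (hzero : φ.toFunC z = 0) :
    φ.κ = 0 ∧ ∀ᵐ y : ℝ ∂φ.μ, Complex.exp (-(z * y)) = 1 := by
  have hnorm : ∀ᵐ y : ℝ ∂φ.μ, ‖Complex.exp (-(z * y))‖ ≤ 1 := by
    filter_upwards [φ.ae_pos] with y hy
    exact Complex.norm_exp_neg_le_one (by rw [Complex.re_mul_ofReal]; exact mul_nonneg hz hy.le)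
  have hre_nonneg : ∀ᵐ y : ℝ ∂φ.μ, 0 ≤ (1 - Complex.exp (-(z * y))).re :=
    hnorm.mono fun _ => Complex.re_one_sub_nonneg
  have hre_sum : φ.κ + φ.δ * z.re + ∫ y, (1 - Complex.exp (-(z * y))).re ∂φ.μ = 0 := by
    have hre_int : ∫ y, (1 - Complex.exp (-(z * y))).re ∂φ.μ =
        (∫ y, (1 - Complex.exp (-(z * y))) ∂φ.μ).re :=
      integral_re (φ.integrable_one_sub_exp hz)
    rw [hre_int]
    simpa [toFunC] using congrArg Complex.re hzero
  have hint_zero : ∫ y, (1 - Complex.exp (-(z * y))).re ∂φ.μ = 0 := by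
    linarith [φ.hκ, mul_nonneg φ.hδ hz, integral_nonneg_of_ae hre_nonneg]
  refine ⟨by linarith [φ.hκ, mul_nonneg φ.hδ hz], ?_⟩
  have hre_zero := (integral_eq_zero_iff_of_nonneg_ae hre_nonneg
    (φ.integrable_one_sub_exp hz).re).mp hint_zero
  filter_upwards [hre_zero, hnorm] with y hy hn
  exact Complex.eq_one_of_norm_le_one_of_re_one_sub_eq_zero hn hy

lemma toFunC_eq_of_ae_exp_eq_one {z : ℂ} (h : ∀ᵐ y : ℝ ∂φ.μ, Complex.exp (-(z * y)) = 1) :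
    φ.toFunC z = φ.κ + φ.δ * z := by
  rw [toFunC, integral_eq_zero_of_ae (h.mono fun y hy => by simp [hy]), add_zero]

lemma toFunC_add_two_pi_div_mul_I (hδ : φ.δ = 0) {h : ℝ} (hh : h ≠ 0)
    (hlat : ∀ᵐ y ∂φ.μ, ∃ n : ℤ, n * h = y) (z : ℂ) :
    φ.toFunC (z + ((2 * Real.pi / h : ℝ) : ℂ) * Complex.I) = φ.toFunC z := by
  simp only [toFunC, hδ, Complex.ofReal_zero, zero_mul, add_zero]
  congr 1
  refine integral_congr_ae (hlat.mono ?_)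
  rintro _ ⟨n, rfl⟩
  have hhC : (h : ℂ) ≠ 0 := Complex.ofReal_ne_zero.mpr hh
  have hshift : -((z + ((2 * Real.pi / h : ℝ) : ℂ) * Complex.I) * ((n * h : ℝ) : ℂ)) =
      -(z * ((n * h : ℝ) : ℂ)) + ((-n : ℤ) : ℂ) * (2 * Real.pi * Complex.I) := by
    push_cast
    field_simp
    ring
  simp only [hshift, Complex.exp_add, Complex.exp_int_mul_two_pi_mul_I, mul_one]

end BernsteinFn

/-- If a Bernstein function vanishes at some nonzero `z₀` with `Re z₀ ≥ 0`, then `φ(0) = 0`,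
the drift is `0`, `z₀` is purely imaginary, the Lévy measure is `Σ_n c_n δ_{h k_n}` with
`Σ c_n < ∞`, `h > 0`, `k_n ∈ ℕ₊`, `c_n ≥ 0`, and `φ` is `2πi/h`-periodic on the right
half-plane. -/
theorem stmt16 (φ : BernsteinFn) (z₀ : ℂ) (hz₀ : z₀ ≠ 0) (hre : 0 ≤ z₀.re)
    (hzero : φ.toFunC z₀ = 0) :
    φ.κ = 0 ∧ φ.δ = 0 ∧ z₀.re = 0 ∧
      ∃ h : ℝ, 0 < h ∧ ∃ (c : ℕ → ℝ) (k : ℕ → ℕ),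
        (∀ n, 0 ≤ c n) ∧ (∀ n, 1 ≤ k n) ∧ Summable c ∧
        φ.μ = Measure.sum
          (fun n => ENNReal.ofReal (c n) • Measure.dirac (h * (k n : ℝ))) ∧
        ∀ z : ℂ, 0 < z.re →
          φ.toFunC (z + ((2 * Real.pi / h : ℝ) : ℂ) * Complex.I) = φ.toFunC z := by
  obtain ⟨hκ, hexp⟩ := φ.κ_eq_zero_and_ae_exp_eq_one hre hzero
  have hδ : φ.δ = 0 := by
    have hlin := φ.toFunC_eq_of_ae_exp_eq_one hexp
    rw [hzero, hκ, Complex.ofReal_zero, zero_add, eq_comm, mul_eq_zero] at hlin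
    exact_mod_cast hlin.resolve_right hz₀
  have hgood : ∀ᵐ y : ℝ ∂φ.μ, 0 < y ∧ Complex.exp (-(z₀ * y)) = 1 := φ.ae_pos.and hexp
  have : (ae φ.μ).NeBot := ae_neBot.mpr fun hμ => φ.nontriv ⟨hκ, hδ, hμ⟩
  obtain ⟨y, hy, hy1⟩ := hgood.exists
  set h : ℝ := 2 * Real.pi / ‖z₀‖
  have hh : 0 < h := by positivity
  set g : ℕ → ℝ := fun n => h * ((n + 1 : ℕ) : ℝ)
  have hg : Function.Injective g := fun m n hmn => by
    simpa using mul_left_cancel₀ hh.ne' hmn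
  have hlat : ∀ᵐ y ∂φ.μ, y ∈ range g :=
    hgood.mono fun _ hy => Complex.exists_nat_eq_of_exp_neg_mul_eq_one hz₀ hy.1 hy.2
  have : IsFiniteMeasure φ.μ := isFiniteMeasure_of_integrable_min_one φ.hint hh <|
    hlat.mono fun _ ⟨n, hn⟩ => hn ▸ le_mul_of_one_le_right hh.le (by simp)
  have hrepr := Measure.eq_sum_smul_dirac_of_ae_mem_range hg hlat
  refine ⟨hκ, hδ, Complex.re_eq_zero_of_exp_neg_mul_eq_one hy.ne' hy1, h, hh,
    fun n => φ.μ.real {g n}, fun n => n + 1, fun _ => measureReal_nonneg,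
    fun n => Nat.le_add_left 1 n,
    ?_, ?_, fun z _ => φ.toFunC_add_two_pi_div_mul_I hδ hh.ne' ?_ z⟩
  · refine ENNReal.summable_toReal ?_
    have hmass := congrArg (fun ν : Measure ℝ => ν univ) hrepr
    simp only [Measure.sum_apply _ MeasurableSet.univ, Measure.smul_apply, measure_univ,
      smul_eq_mul, mul_one] at hmass
    exact hmass ▸ measure_ne_top φ.μ univ
  · convert hrepr using 4 with n
    exact ofReal_measureReal (measure_ne_top _ _)
  · exact hlat.mono fun _ ⟨n, hn⟩ => ⟨n + 1, by simp only [← hn, g]; push_cast; ring⟩
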